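/- arXiv:2512.01254 — 5 statements merged into one kernel-verified Lean document; each statement's English description precedes it below -/
import Mathlib

section
/- Let R be a commutative ring and let f be a formal power series in R[[t]] with constant coefficient 1. Then there exists a unique sequence (α_i)_{i≥1} of elements of R such that f is the infinite product ∏_{i=1}^∞ (1 − α_i t^i); precisely, for every integer m ≥ 1, f is congruent to the finite product ∏_{i=1}^m (1 − α_i t^i) modulo t^{m+1}, and the sequence (α_i) is uniquely determined by this property. -/
/-!
Multiplying a series with constant coefficient `1` by `1 - a t^n` leaves its coefficients of
degree `< n` unchanged and subtracts `a` from its coefficient of degree `n`. Hence the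
coefficient of `t^(m+1)` in `∏_{i ≤ m+1} (1 - α_i t^i)` is that of `∏_{i ≤ m} (1 - α_i t^i)`
minus `α_{m+1}`, so matching it with the coefficient of `f` forces, and determines, `α_{m+1}`
recursively, while the lower coefficients are not disturbed.
-/

open PowerSeries Finset

section

variable {R : Type*} [CommRing R]

lemma PowerSeries.coeff_mul_one_sub_C_mul_X_pow (P : R⟦X⟧) (a : R) (n j : ℕ) :
    coeff j (P * (1 - C a * X ^ n)) = coeff j P - if n ≤ j then a * coeff (j - n) P else 0 := by
  rw [mul_sub, mul_one, mul_left_comm, map_sub, coeff_C_mul, coeff_mul_X_pow']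
  split_ifs <;> simp

/-- `∏_{i=1}^m (1 - α_i t^i)`, with `α i` the coefficient attached to `t^(i+1)`. -/
noncomputable def partialProd (α : ℕ → R) (m : ℕ) : R⟦X⟧ :=
  ∏ i ∈ range m, (1 - C (α i) * X ^ (i + 1))

lemma constantCoeff_partialProd (α : ℕ → R) (m : ℕ) : constantCoeff (partialProd α m) = 1 :=
  (map_prod _ _ _).trans <| prod_eq_one fun i _ => by simp

lemma coeff_partialProd_succ_of_le (α : ℕ → R) {m j : ℕ} (hj : j ≤ m) :
    coeff j (partialProd α (m + 1)) = coeff j (partialProd α m) := by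
  rw [partialProd, prod_range_succ, coeff_mul_one_sub_C_mul_X_pow, if_neg (by omega), sub_zero,
    partialProd]

lemma coeff_partialProd_succ_self (α : ℕ → R) (m : ℕ) :
    coeff (m + 1) (partialProd α (m + 1)) = coeff (m + 1) (partialProd α m) - α m := by
  rw [partialProd, prod_range_succ, coeff_mul_one_sub_C_mul_X_pow, if_pos le_rfl, Nat.sub_self,
    coeff_zero_eq_constantCoeff_apply, ← partialProd, constantCoeff_partialProd, mul_one]

lemma partialProd_congr {α β : ℕ → R} {m : ℕ} (h : ∀ i < m, α i = β i) :
    partialProd α m = partialProd β m :=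
  prod_congr rfl fun i hi => by rw [h i (mem_range.mp hi)]

lemma eq_of_coeff_partialProd_succ_self_eq {α β : ℕ → R}
    (h : ∀ m, coeff (m + 1) (partialProd α (m + 1)) = coeff (m + 1) (partialProd β (m + 1))) :
    α = β := by
  funext m
  induction m using Nat.strong_induction_on with
  | _ m ih =>
    have h_top := h m
    rw [coeff_partialProd_succ_self, coeff_partialProd_succ_self, partialProd_congr ih] at h_top
    exact sub_right_injective h_top

/-- The product runs over `Fin m` so that the recursion is visibly well founded. -/
noncomputable def factorSeq (f : R⟦X⟧) (m : ℕ) : R :=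
  coeff (m + 1) (∏ i : Fin m, (1 - C (factorSeq f i) * X ^ ((i : ℕ) + 1))) - coeff (m + 1) f
termination_by m
decreasing_by exact i.isLt

lemma factorSeq_eq (f : R⟦X⟧) (m : ℕ) :
    factorSeq f m = coeff (m + 1) (partialProd (factorSeq f) m) - coeff (m + 1) f := by
  rw [factorSeq, partialProd,
    Fin.prod_univ_eq_prod_range (fun i => 1 - C (factorSeq f i) * X ^ (i + 1))]

lemma coeff_partialProd_factorSeq {f : R⟦X⟧} (hf : constantCoeff f = 1) :
    ∀ m j, j ≤ m → coeff j f = coeff j (partialProd (factorSeq f) m)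
  | 0, j, hj => by
    simp only [Nat.le_zero.mp hj, coeff_zero_eq_constantCoeff_apply, constantCoeff_partialProd, hf]
  | m + 1, j, hj => by
    rcases hj.lt_or_eq with hj | rfl
    · have hj : j ≤ m := Nat.lt_succ_iff.mp hj
      rw [coeff_partialProd_succ_of_le _ hj, coeff_partialProd_factorSeq hf m j hj]
    · rw [coeff_partialProd_succ_self, factorSeq_eq, sub_sub_cancel]

end

/-- Every formal power series over a commutative ring `R` with constant
coefficient `1` can be written uniquely as the infinite product `∏_{i=1}^∞ (1 − α_i t^i)`:
precisely, there is a unique sequence `(α_i)_{i ≥ 1}` of elements of `R` (here indexed so that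
`α i` is the coefficient attached to `t^(i+1)`) such that for every `m ≥ 1`, `f` agrees with
the finite product `∏_{i=1}^m (1 − α_i t^i)` in all coefficients of degree `≤ m`, i.e. modulo
`t^(m+1)`. -/
theorem unique_infinite_product_decomposition (R : Type*) [CommRing R] (f : PowerSeries R)
    (hf : PowerSeries.constantCoeff (R := R) f = 1) :
    ∃! α : ℕ → R, ∀ m : ℕ, 1 ≤ m → ∀ j : ℕ, j ≤ m →
      (PowerSeries.coeff (R := R) j) f =
        (PowerSeries.coeff (R := R) j)
          (∏ i ∈ Finset.range m, (1 - PowerSeries.C (R := R) (α i) * PowerSeries.X ^ (i + 1))) := by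
  have h_exists := coeff_partialProd_factorSeq hf
  refine ⟨factorSeq f, fun m _ => h_exists m, fun β hβ => ?_⟩
  exact eq_of_coeff_partialProd_succ_self_eq fun m =>
    (hβ (m + 1) m.succ_pos (m + 1) le_rfl).symm.trans (h_exists (m + 1) (m + 1) le_rfl)
end

section
/- Let R be a commutative ring and m ≥ 1 an integer. For every element α of the truncated polynomial ring R[t]/(t^{m+1}) with α ≡ 1 mod t (i.e. α − 1 lies in the ideal generated by the image of t), there exist unique elements b_1, …, b_m ∈ R such that α = ∏_{i=1}^m (1 − b_i t^i) in R[t]/(t^{m+1}). -/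
open Polynomial Finset

section Helpers

variable {R : Type*} [CommRing R] {m : ℕ}

private theorem coeff_zero_of_mem_span {k : ℕ} (hk : k ≤ m) (r : R)
    (h : Ideal.Quotient.mk (Ideal.span {(X : Polynomial R) ^ (m + 1)}) (C r * X ^ k) ∈
      Ideal.span {(Ideal.Quotient.mk (Ideal.span {(X : Polynomial R) ^ (m + 1)}) X) ^ (k + 1)}) :
    r = 0 := by
  rw [Ideal.mem_span_singleton] at h
  obtain ⟨q, hq⟩ := h
  obtain ⟨g, rfl⟩ := Ideal.Quotient.mk_surjective q
  rw [← map_pow, ← map_mul, Ideal.Quotient.eq, Ideal.mem_span_singleton] at hq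
  obtain ⟨h2, hh2⟩ := hq
  have := congrArg (fun p => Polynomial.coeff p k) hh2
  simp only [coeff_sub, coeff_C_mul, coeff_X_pow_self, mul_one] at this
  have h1 : (X ^ (k+1) * g).coeff k = 0 := by
    have : (X : Polynomial R) ^ (k+1) ∣ X ^ (k+1) * g := ⟨g, rfl⟩
    exact (X_pow_dvd_iff.mp this) k (Nat.lt_succ_self k)
  have h3 : ((X : Polynomial R) ^ (m+1) * h2).coeff k = 0 := by
    have : (X : Polynomial R) ^ (k+1) ∣ X ^ (m+1) * h2 :=
      dvd_mul_of_dvd_left (pow_dvd_pow X (by omega)) h2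
    exact (X_pow_dvd_iff.mp this) k (Nat.lt_succ_self k)
  rw [h1] at this
  rw [show r - 0 = r by ring] at this
  rw [this, h3]

private theorem isUnit_one_sub_mk {k : ℕ} (hk : 1 ≤ k) (r : R) :
    IsUnit (1 - Ideal.Quotient.mk (Ideal.span {(X : Polynomial R) ^ (m + 1)}) (C r * X ^ k)) := by
  refine IsNilpotent.isUnit_one_sub ⟨m + 1, ?_⟩
  rw [← map_pow, Ideal.Quotient.eq_zero_iff_mem, Ideal.mem_span_singleton, mul_pow, ← pow_mul]
  exact dvd_mul_of_dvd_right (pow_dvd_pow X (Nat.le_mul_of_pos_left _ hk)) _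

private theorem prod_sub_one_mem {Q : Type*} [CommRing Q] (J : Ideal Q) (s : Finset ℕ)
    (f : ℕ → Q) (h : ∀ i ∈ s, f i - 1 ∈ J) : (∏ i ∈ s, f i) - 1 ∈ J := by
  induction s using Finset.cons_induction with
  | empty => simpa using J.zero_mem
  | cons a s ha ih =>
      rw [Finset.prod_cons]
      have h1 : f a - 1 ∈ J := h a (Finset.mem_cons_self a s)
      have h2 : (∏ i ∈ s, f i) - 1 ∈ J := ih fun i hi => h i (Finset.mem_cons_of_mem hi)
      have : f a * ∏ i ∈ s, f i - 1 = f a * ((∏ i ∈ s, f i) - 1) + (f a - 1) := by ring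
      rw [this]
      exact J.add_mem (J.mul_mem_left _ h2) h1

private theorem aux_base (k : ℕ) (hk : m + 1 ≤ k)
    (α : Polynomial R ⧸ Ideal.span {(X : Polynomial R) ^ (m + 1)})
    (hα : α - 1 ∈ Ideal.span
      {(Ideal.Quotient.mk (Ideal.span {(X : Polynomial R) ^ (m + 1)}) X) ^ k}) :
    ∃! b : ℕ → R, (∀ i, i ∉ Finset.Icc k m → b i = 0) ∧
      α = ∏ i ∈ Finset.Icc k m,
        (1 - Ideal.Quotient.mk (Ideal.span {(X : Polynomial R) ^ (m + 1)}) (C (b i) * X ^ i)) := by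
  have ht : (Ideal.Quotient.mk (Ideal.span {(X : Polynomial R) ^ (m + 1)}) X) ^ k = 0 := by
    rw [← map_pow, Ideal.Quotient.eq_zero_iff_mem, Ideal.mem_span_singleton]
    exact pow_dvd_pow X hk
  rw [ht] at hα
  have hα1 : α = 1 := by
    rw [Ideal.mem_span_singleton, zero_dvd_iff, sub_eq_zero] at hα
    exact hα
  have hIcc : Finset.Icc k m = ∅ := Finset.Icc_eq_empty (by omega)
  refine ⟨fun _ => 0, ⟨fun i _ => rfl, by simp [hIcc, hα1]⟩, ?_⟩
  rintro b ⟨hsupp, -⟩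
  funext i
  exact hsupp i (by simp [hIcc])

set_option maxHeartbeats 1000000 in
private theorem aux (d : ℕ) : ∀ k, 1 ≤ k → m + 1 ≤ k + d →
    ∀ α : Polynomial R ⧸ Ideal.span {(X : Polynomial R) ^ (m + 1)},
      α - 1 ∈ Ideal.span
        {(Ideal.Quotient.mk (Ideal.span {(X : Polynomial R) ^ (m + 1)}) X) ^ k} →
      ∃! b : ℕ → R, (∀ i, i ∉ Finset.Icc k m → b i = 0) ∧
        α = ∏ i ∈ Finset.Icc k m,
          (1 - Ideal.Quotient.mk (Ideal.span {(X : Polynomial R) ^ (m + 1)})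
                (C (b i) * X ^ i)) := by
  induction d with
  | zero => exact fun k hk1 hkd α hα => aux_base k (by omega) α hα
  | succ d ih =>
    intro k hk1 hkd α hα
    rcases le_or_gt (m + 1) k with hcase | hcase
    · exact aux_base k hcase α hα
    have hkm : k ≤ m := by omega
    obtain ⟨β, hβ⟩ := Ideal.mem_span_singleton.mp hα
    obtain ⟨f, rfl⟩ := Ideal.Quotient.mk_surjective β
    set r := f.coeff 0 with hr
    obtain ⟨U, hU⟩ := isUnit_one_sub_mk (m := m) hk1 (-r)
    obtain ⟨g, hg⟩ : (X : Polynomial R) ∣ (f - C r) := by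
      rw [X_dvd_iff, coeff_sub, coeff_C_zero, hr, sub_self]
    have e5 : Ideal.Quotient.mk (Ideal.span {(X : Polynomial R) ^ (m + 1)}) (C (-r) * X ^ k) = - Ideal.Quotient.mk (Ideal.span {(X : Polynomial R) ^ (m + 1)}) (C r * X ^ k) := by
      rw [C_neg, neg_mul, map_neg]
    have e1 : Ideal.Quotient.mk (Ideal.span {(X : Polynomial R) ^ (m + 1)}) (X ^ k * f) =
        (Ideal.Quotient.mk (Ideal.span {(X : Polynomial R) ^ (m + 1)}) X) ^ k * Ideal.Quotient.mk (Ideal.span {(X : Polynomial R) ^ (m + 1)}) f := by rw [map_mul, map_pow]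
    have e2 : Ideal.Quotient.mk (Ideal.span {(X : Polynomial R) ^ (m + 1)}) (X ^ (k+1) * g) =
        (Ideal.Quotient.mk (Ideal.span {(X : Polynomial R) ^ (m + 1)}) X) ^ (k+1) * Ideal.Quotient.mk (Ideal.span {(X : Polynomial R) ^ (m + 1)}) g := by rw [map_mul, map_pow]
    have e3 : (X : Polynomial R) ^ k * f - (C r * X ^ k) = X ^ (k+1) * g := by
      have h' : (X : Polynomial R) ^ (k+1) * g = X ^ k * (X * g) := by ring
      rw [h', ← hg]; ring
    have e4 : Ideal.Quotient.mk (Ideal.span {(X : Polynomial R) ^ (m + 1)}) (X ^ k * f) - Ideal.Quotient.mk (Ideal.span {(X : Polynomial R) ^ (m + 1)}) (C r * X ^ k) =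
        Ideal.Quotient.mk (Ideal.span {(X : Polynomial R) ^ (m + 1)}) (X ^ (k+1) * g) := by rw [← map_sub, e3]
    have hkey : α - ↑U = (Ideal.Quotient.mk (Ideal.span {(X : Polynomial R) ^ (m + 1)}) X) ^ (k+1) * Ideal.Quotient.mk (Ideal.span {(X : Polynomial R) ^ (m + 1)}) g := by
      rw [hU]
      linear_combination hβ + e5 - e1 + e4 + e2
    have hα' : (↑U⁻¹ : Polynomial R ⧸ Ideal.span {(X : Polynomial R) ^ (m + 1)}) * α - 1 ∈
        Ideal.span {(Ideal.Quotient.mk (Ideal.span {(X : Polynomial R) ^ (m + 1)}) X) ^ (k+1)} := by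
      have h' : (↑U⁻¹ : Polynomial R ⧸ Ideal.span {(X : Polynomial R) ^ (m + 1)}) * α - 1 = ↑U⁻¹ * (α - ↑U) := by
        rw [mul_sub, Units.inv_mul]
      rw [h', hkey, Ideal.mem_span_singleton]
      exact ⟨↑U⁻¹ * Ideal.Quotient.mk (Ideal.span {(X : Polynomial R) ^ (m + 1)}) g, by ring⟩
    obtain ⟨c, ⟨hcsupp, hcprod⟩, hcuniq⟩ := ih (k+1) (by omega) (by omega) (↑U⁻¹ * α) hα'
    have hnot : k ∉ Finset.Icc (k+1) m := by simp
    have hsplit : Finset.Icc k m = insert k (Finset.Icc (k+1) m) := by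
      rw [Finset.Icc_add_one_left_eq_Ioc, Finset.Icc_eq_cons_Ioc hkm, Finset.cons_eq_insert]
    set b := Function.update c k (-r) with hb
    have hbk : b k = -r := Function.update_self k (-r) c
    have hbne : ∀ i, i ≠ k → b i = c i := fun i hi => Function.update_of_ne hi (-r) c
    refine ⟨b, ⟨?_, ?_⟩, ?_⟩
    · intro i hi
      have hik : i ≠ k := by rintro rfl; exact hi (Finset.mem_Icc.mpr ⟨le_refl _, hkm⟩)
      rw [hbne i hik]
      exact hcsupp i (by simp only [Finset.mem_Icc] at hi ⊢; omega)
    · rw [hsplit, Finset.prod_insert hnot]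
      have hpc : ∏ i ∈ Finset.Icc (k+1) m, (1 - Ideal.Quotient.mk (Ideal.span {(X : Polynomial R) ^ (m + 1)}) (C (b i) * X ^ i)) =
          ∏ i ∈ Finset.Icc (k+1) m, (1 - Ideal.Quotient.mk (Ideal.span {(X : Polynomial R) ^ (m + 1)}) (C (c i) * X ^ i)) := by
        refine Finset.prod_congr rfl fun i hi => ?_
        rw [hbne i (by simp only [Finset.mem_Icc] at hi; omega)]
      rw [hpc, ← hcprod, hbk, ← hU, ← mul_assoc, Units.mul_inv, one_mul]
    · rintro b' ⟨hb'supp, hb'prod⟩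
      rw [hsplit, Finset.prod_insert hnot] at hb'prod
      set P := ∏ i ∈ Finset.Icc (k+1) m,
        (1 - Ideal.Quotient.mk (Ideal.span {(X : Polynomial R) ^ (m + 1)}) (C (b' i) * X ^ i)) with hPdef
      have hP1 : P - 1 ∈ Ideal.span {(Ideal.Quotient.mk (Ideal.span {(X : Polynomial R) ^ (m + 1)}) X) ^ (k+1)} := by
        refine prod_sub_one_mem _ _ _ fun i hi => ?_
        have hik : k + 1 ≤ i := (Finset.mem_Icc.mp hi).1
        have h' : (1 - Ideal.Quotient.mk (Ideal.span {(X : Polynomial R) ^ (m + 1)}) (C (b' i) * X ^ i)) - 1 =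
            -(Ideal.Quotient.mk (Ideal.span {(X : Polynomial R) ^ (m + 1)}) (C (b' i)) * (Ideal.Quotient.mk (Ideal.span {(X : Polynomial R) ^ (m + 1)}) X) ^ i) := by
          rw [← map_pow, ← map_mul]; ring
        rw [h', Ideal.mem_span_singleton]
        exact dvd_neg.mpr ((pow_dvd_pow _ hik).mul_left _)
      have h5 : α - (1 - Ideal.Quotient.mk (Ideal.span {(X : Polynomial R) ^ (m + 1)}) (C (b' k) * X ^ k)) ∈
          Ideal.span {(Ideal.Quotient.mk (Ideal.span {(X : Polynomial R) ^ (m + 1)}) X) ^ (k+1)} := by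
        have h' : α - (1 - Ideal.Quotient.mk (Ideal.span {(X : Polynomial R) ^ (m + 1)}) (C (b' k) * X ^ k)) =
            (1 - Ideal.Quotient.mk (Ideal.span {(X : Polynomial R) ^ (m + 1)}) (C (b' k) * X ^ k)) * (P - 1) := by
          rw [hb'prod]; ring
        rw [h']
        exact Ideal.mul_mem_left _ _ hP1
      have h6 : α - ↑U ∈ Ideal.span {(Ideal.Quotient.mk (Ideal.span {(X : Polynomial R) ^ (m + 1)}) X) ^ (k+1)} := by
        rw [Ideal.mem_span_singleton]
        exact ⟨Ideal.Quotient.mk (Ideal.span {(X : Polynomial R) ^ (m + 1)}) g, hkey⟩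
      have h7eq : (α - (1 - Ideal.Quotient.mk (Ideal.span {(X : Polynomial R) ^ (m + 1)}) (C (b' k) * X ^ k))) - (α - ↑U)
          = Ideal.Quotient.mk (Ideal.span {(X : Polynomial R) ^ (m + 1)}) (C (r + b' k) * X ^ k) := by
        rw [hU, e5]
        have h'' : (C (r + b' k) : Polynomial R) * X ^ k = C r * X ^ k + C (b' k) * X ^ k := by
          rw [C_add]; ring
        rw [h'', map_add]
        ring
      have h7 : Ideal.Quotient.mk (Ideal.span {(X : Polynomial R) ^ (m + 1)}) (C (r + b' k) * X ^ k) ∈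
          Ideal.span {(Ideal.Quotient.mk (Ideal.span {(X : Polynomial R) ^ (m + 1)}) X) ^ (k+1)} := by
        rw [← h7eq]
        exact Ideal.sub_mem _ h5 h6
      have hrb : r + b' k = 0 := coeff_zero_of_mem_span hkm _ h7
      have hb'k : b' k = -r := by linear_combination hrb
      rw [hb'k, ← hU] at hb'prod
      have hPα : P = ↑U⁻¹ * α := by
        rw [hb'prod, ← mul_assoc, Units.inv_mul, one_mul]
      have hc' : Function.update b' k 0 = c := by
        apply hcuniq
        constructor
        · intro i hi
          by_cases hik : i = k
          · rw [hik]; exact Function.update_self k 0 b'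
          · rw [Function.update_of_ne hik]
            refine hb'supp i ?_
            simp only [Finset.mem_Icc] at hi ⊢
            omega
        · rw [← hPα, hPdef]
          refine Finset.prod_congr rfl fun i hi => ?_
          rw [Function.update_of_ne (by simp only [Finset.mem_Icc] at hi; omega : i ≠ k)]
      funext i
      by_cases hik : i = k
      · subst hik; rw [hb'k, hbk]
      · rw [hbne i hik, ← hc', Function.update_of_ne hik]


private theorem prod_Icc_eq_prod_fin {Q : Type*} [CommMonoid Q] (m : ℕ) (G : ℕ → Q) :
    ∏ i ∈ Finset.Icc 1 m, G i = ∏ i : Fin m, G ((i : ℕ) + 1) := by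
  rw [← Finset.Ico_add_one_right_eq_Icc, Finset.prod_Ico_eq_prod_range,
    Fin.prod_univ_eq_prod_range (fun i => G (i + 1)) m]
  refine Finset.prod_congr ?_ fun i _ => by rw [add_comm]
  congr 1

end Helpers

/-- Let `R` be a commutative ring and `m ≥ 1`. Every element `α` of the
truncated polynomial ring `R[t]/(t^(m+1))` with `α ≡ 1 mod t` (i.e. `α − 1` lies in the ideal
generated by the image of `t`) can be written uniquely as `∏_{i=1}^m (1 − b_i t^i)` for
elements `b_1, …, b_m ∈ R` (here `b : Fin m → R`, with `b i` attached to `t^(i+1)`). -/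
theorem unique_truncated_product_decomposition (R : Type*) [CommRing R] (m : ℕ) (hm : 1 ≤ m)
    (α : Polynomial R ⧸ Ideal.span {(Polynomial.X : Polynomial R) ^ (m + 1)})
    (hα : α - 1 ∈ Ideal.span
      {Ideal.Quotient.mk (Ideal.span {(Polynomial.X : Polynomial R) ^ (m + 1)}) Polynomial.X}) :
    ∃! b : Fin m → R,
      α = ∏ i : Fin m,
        (1 - Ideal.Quotient.mk (Ideal.span {(Polynomial.X : Polynomial R) ^ (m + 1)})
              (Polynomial.C (b i) * Polynomial.X ^ ((i : ℕ) + 1))) := by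
  have hα1 : α - 1 ∈ Ideal.span
      {(Ideal.Quotient.mk (Ideal.span {(X : Polynomial R) ^ (m + 1)}) X) ^ 1} := by
    rwa [pow_one]
  obtain ⟨B, ⟨hBsupp, hBprod⟩, hBuniq⟩ := aux (m := m) m 1 le_rfl (by omega) α hα1
  refine ⟨fun i => B ((i : ℕ) + 1), ?_, ?_⟩
  · rw [hBprod]
    exact prod_Icc_eq_prod_fin m fun i =>
      1 - Ideal.Quotient.mk (Ideal.span {(X : Polynomial R) ^ (m + 1)}) (C (B i) * X ^ i)
  · intro b' hb'
    set B' : ℕ → R := fun n => if h : 1 ≤ n ∧ n ≤ m then b' ⟨n - 1, by omega⟩ else 0 with hB'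
    have hval : ∀ i : Fin m, B' ((i : ℕ) + 1) = b' i := by
      intro i
      have h1 : 1 ≤ (i : ℕ) + 1 ∧ (i : ℕ) + 1 ≤ m := ⟨by omega, by omega⟩
      simp only [hB']
      rw [dif_pos h1]
      exact congrArg b' (Fin.ext (by simp))
    have hsupp : ∀ i, i ∉ Finset.Icc 1 m → B' i = 0 := by
      intro i hi
      simp only [Finset.mem_Icc] at hi
      exact dif_neg hi
    have hprod : α = ∏ i ∈ Finset.Icc 1 m,
        (1 - Ideal.Quotient.mk (Ideal.span {(X : Polynomial R) ^ (m + 1)}) (C (B' i) * X ^ i)) := by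
      rw [hb', prod_Icc_eq_prod_fin m fun i =>
        1 - Ideal.Quotient.mk (Ideal.span {(X : Polynomial R) ^ (m + 1)}) (C (B' i) * X ^ i)]
      exact Finset.prod_congr rfl fun i _ => by rw [hval i]
    have hBB : B' = B := hBuniq B' ⟨hsupp, hprod⟩
    funext i
    rw [← hval i, hBB]
end

section
/- Let p be a prime number and let R be a commutative ring of characteristic p. Let P(X,Y) := ∑_{i=1}^{p−1} (1/p)·binom(p,i)·X^{p−i}·Y^{i} ∈ ℤ[X,Y] (the coefficients are integers since p divides binom(p,i) for 0 < i < p). Then for all r₁, r₂ ∈ R, the identity (r₁+r₂)^{p−1}·d(r₁+r₂) − r₁^{p−1}·d r₁ − r₂^{p−1}·d r₂ = d(P(r₁,r₂)) holds in Ω¹_{R/ℤ}, where P(r₁,r₂) denotes the evaluation of the polynomial P at (r₁, r₂). -/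
/-!
Since `d(r ^ p) = p • r ^ (p - 1) • dr`, multiplying the left side by `p` gives
`d((r₁ + r₂) ^ p - r₁ ^ p - r₂ ^ p) = d(p * P(r₁, r₂)) = p • dP(r₁, r₂)`, where
`P = addPowCarry p`. In characteristic `p` this factor cannot be cancelled, so the identity is
proved for the generic pair `X 0, X 1` in `ℤ[X 0, X 1]`, whose module of differentials is free
and hence has no additive torsion, and then pushed to `R` along `X 0 ↦ r₁, X 1 ↦ r₂`.
-/

open MvPolynomial Finset

def addPowCarry {S : Type*} [CommSemiring S] (p : ℕ) (x y : S) : S :=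
  ∑ i ∈ Ioo 0 p, ((p.choose i / p : ℕ) : S) * (x ^ (p - i) * y ^ i)

section addPowCarry

variable {S T F : Type*} [CommSemiring S] [CommSemiring T] {p : ℕ}

theorem add_pow_prime_eq_add_add_mul_addPowCarry (hp : p.Prime) (x y : S) :
    (x + y) ^ p = x ^ p + y ^ p + p * addPowCarry p x y := by
  rw [add_comm x, add_pow_prime_eq' hp, addPowCarry, add_comm (y ^ p)]
  congr 2
  exact sum_congr rfl fun i _ ↦ by ring

theorem map_addPowCarry [FunLike F S T] [RingHomClass F S T] (f : F) (x y : S) :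
    f (addPowCarry p x y) = addPowCarry p (f x) (f y) := by
  simp [addPowCarry]

end addPowCarry

section Derivation

variable {R S M : Type*} [CommSemiring R] [CommRing S] [Algebra R S] [AddCommGroup M] [Module S M]
  [Module R M] (D : Derivation R S M) {p : ℕ}

theorem Derivation.nsmul_pow_pred_smul_add_sub (hp : p.Prime) (x y : S) :
    p • ((x + y) ^ (p - 1) • D (x + y) - x ^ (p - 1) • D x - y ^ (p - 1) • D y) =
      p • D (addPowCarry p x y) := by
  have carry : (x + y) ^ p - x ^ p - y ^ p = p • addPowCarry p x y := by
    rw [add_pow_prime_eq_add_add_mul_addPowCarry hp, nsmul_eq_mul]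
    ring
  rw [smul_sub, smul_sub, ← D.leibniz_pow, ← D.leibniz_pow, ← D.leibniz_pow, ← map_sub,
    ← map_sub, carry, map_nsmul]

theorem Derivation.pow_pred_smul_add_sub [IsAddTorsionFree M] (hp : p.Prime) (x y : S) :
    (x + y) ^ (p - 1) • D (x + y) - x ^ (p - 1) • D x - y ^ (p - 1) • D y =
      D (addPowCarry p x y) :=
  nsmul_right_injective hp.ne_zero (D.nsmul_pow_pred_smul_add_sub hp x y)

end Derivation

instance KaehlerDifferential.isAddTorsionFree_mvPolynomial (σ R : Type*) [CommRing R] [IsDomain R]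
    [CharZero R] :
    IsAddTorsionFree Ω[MvPolynomial σ R⁄R] :=
  haveI := Module.Free.of_basis (KaehlerDifferential.mvPolynomialBasis R σ)
  .of_isTorsionFree (MvPolynomial σ R) _

theorem inverse_cartier_additive_mod_exact_general (p : ℕ) (hp : p.Prime) (R : Type*) [CommRing R]
    (r₁ r₂ : R) :
    (r₁ + r₂) ^ (p - 1) • (KaehlerDifferential.D ℤ R) (r₁ + r₂)
        - r₁ ^ (p - 1) • (KaehlerDifferential.D ℤ R) r₁
        - r₂ ^ (p - 1) • (KaehlerDifferential.D ℤ R) r₂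
      = (KaehlerDifferential.D ℤ R)
          (∑ i ∈ Finset.Ioo 0 p, ((p.choose i / p : ℕ) : R) * (r₁ ^ (p - i) * r₂ ^ i)) := by
  let _ := (aeval (R := ℤ) ![r₁, r₂]).toAlgebra
  have h := congrArg (KaehlerDifferential.map ℤ ℤ (MvPolynomial (Fin 2) ℤ) R)
    ((KaehlerDifferential.D ℤ (MvPolynomial (Fin 2) ℤ)).pow_pred_smul_add_sub hp (X 0) (X 1))
  have hX (i : Fin 2) : algebraMap (MvPolynomial (Fin 2) ℤ) R (X i) = ![r₁, r₂] i := aeval_X _ i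
  simp only [map_sub, LinearMap.map_smul, KaehlerDifferential.map_D,
    ← algebraMap_smul R (_ ^ (p - 1) : MvPolynomial (Fin 2) ℤ), map_pow,
    map_add (algebraMap (MvPolynomial (Fin 2) ℤ) R), map_addPowCarry, hX] at h
  exact h

/-- Let `p` be prime and `R` a commutative ring of characteristic `p`.
With `P(X,Y) = ∑_{i=1}^{p−1} (1/p)·binom(p,i)·X^{p−i}·Y^i` (integer coefficients, since `p`
divides `binom(p,i)` for `0 < i < p`), the identity
`(r₁+r₂)^{p−1}·d(r₁+r₂) − r₁^{p−1}·dr₁ − r₂^{p−1}·dr₂ = d(P(r₁,r₂))`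
holds in the module of absolute Kähler differentials `Ω¹_{R/ℤ}`. -/
theorem inverse_cartier_additive_mod_exact (p : ℕ) (hp : p.Prime) (R : Type*) [CommRing R]
    [CharP R p] (r₁ r₂ : R) :
    (r₁ + r₂) ^ (p - 1) • (KaehlerDifferential.D ℤ R) (r₁ + r₂)
        - r₁ ^ (p - 1) • (KaehlerDifferential.D ℤ R) r₁
        - r₂ ^ (p - 1) • (KaehlerDifferential.D ℤ R) r₂
      = (KaehlerDifferential.D ℤ R)
          (∑ i ∈ Finset.Ioo 0 p, ((p.choose i / p : ℕ) : R) * (r₁ ^ (p - i) * r₂ ^ i)) :=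
  inverse_cartier_additive_mod_exact_general p hp R r₁ r₂
end

section
/- Let k be a field and m ≥ 1 an integer. Every element α of k[t]/(t^{m+1}) with α ≡ 1 mod t is a finite product of images in k[t]/(t^{m+1}) of irreducible polynomials f ∈ k[t] with constant coefficient f(0) = 1. In particular, the subgroup {α ∈ (k[t]/(t^{m+1}))ˣ : α ≡ 1 mod t} of the unit group is generated by the images of irreducible polynomials with constant coefficient 1. -/
/-- Let `k` be a field and `m ≥ 1`. Every element `α` of `k[t]/(t^(m+1))`
with `α ≡ 1 mod t` (i.e. `α − 1` lies in the ideal generated by the image of `t`) is a finite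
product of images in `k[t]/(t^(m+1))` of irreducible polynomials `f ∈ k[t]` with constant
coefficient `f(0) = 1`. In particular, the subgroup `{α : α ≡ 1 mod t}` of the unit group is
generated by the images of irreducible polynomials with constant coefficient `1`. -/
theorem congr_one_units_generated_by_irreducibles (k : Type*) [Field k] (m : ℕ) (hm : 1 ≤ m)
    (α : Polynomial k ⧸ Ideal.span {(Polynomial.X : Polynomial k) ^ (m + 1)})
    (hα : α - 1 ∈ Ideal.span
      {Ideal.Quotient.mk (Ideal.span {(Polynomial.X : Polynomial k) ^ (m + 1)}) Polynomial.X}) :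
    ∃ s : Multiset (Polynomial k),
      (∀ g ∈ s, Irreducible g ∧ g.coeff 0 = 1) ∧
      (s.map (fun g =>
        Ideal.Quotient.mk (Ideal.span {(Polynomial.X : Polynomial k) ^ (m + 1)}) g)).prod = α := by
  rw [Ideal.mem_span_singleton] at hα
  obtain ⟨β, hβ⟩ := hα
  obtain ⟨q, rfl⟩ := Ideal.Quotient.mk_surjective β
  set p : Polynomial k := 1 + Polynomial.X * q with hp
  set mk := Ideal.Quotient.mk (Ideal.span {(Polynomial.X : Polynomial k) ^ (m + 1)}) with hmk
  have hmkp : mk p = α := by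
    have h1 : mk p = 1 + mk Polynomial.X * mk q := by simp [hp]
    rw [h1, ← hβ]; ring
  have hc0 : p.coeff 0 = 1 := by
    simp [hp, Polynomial.coeff_add, Polynomial.mul_coeff_zero]
  have hp0 : p ≠ 0 := fun h => by simp [h] at hc0
  obtain ⟨u, hu⟩ := UniqueFactorizationMonoid.factors_prod hp0
  set f := UniqueFactorizationMonoid.factors p with hf
  have hconst : (f.map (fun g => Polynomial.constantCoeff g)).prod
      * Polynomial.constantCoeff (u : Polynomial k) = 1 := by
    have h2 := congrArg Polynomial.constantCoeff hu
    rw [map_mul, ← Multiset.prod_hom f Polynomial.constantCoeff] at h2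
    rw [h2]
    simpa [Polynomial.constantCoeff_apply] using hc0
  set A := (f.map (fun g => Polynomial.constantCoeff g)).prod with hA
  have hAne : A ≠ 0 := by
    intro h
    rw [h, zero_mul] at hconst
    exact zero_ne_one hconst
  have hne : ∀ g ∈ f, Polynomial.constantCoeff g ≠ 0 := by
    intro g hg h
    exact hAne (Multiset.prod_eq_zero (by
      rw [Multiset.mem_map]; exact ⟨g, hg, h⟩))
  have hudeg : (u : Polynomial k).natDegree = 0 := Polynomial.natDegree_eq_zero_of_isUnit u.isUnit
  have huC : (u : Polynomial k) = Polynomial.C (Polynomial.constantCoeff (u : Polynomial k)) := by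
    conv_lhs => rw [Polynomial.eq_C_of_natDegree_eq_zero hudeg]
    rfl
  have huA : Polynomial.constantCoeff (u : Polynomial k) = A⁻¹ :=
    eq_inv_of_mul_eq_one_right hconst
  refine ⟨f.map (fun g => Polynomial.C (Polynomial.constantCoeff g)⁻¹ * g), ?_, ?_⟩
  · intro g hg
    rw [Multiset.mem_map] at hg
    obtain ⟨g', hg', rfl⟩ := hg
    have hirr : Irreducible g' := UniqueFactorizationMonoid.irreducible_of_factor g' hg'
    have hun : IsUnit (Polynomial.C (Polynomial.constantCoeff g')⁻¹) :=
      Polynomial.isUnit_C.2 (isUnit_iff_ne_zero.2 (inv_ne_zero (hne g' hg')))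
    refine ⟨(irreducible_isUnit_mul hun).2 hirr, ?_⟩
    simp only [Polynomial.mul_coeff_zero, Polynomial.coeff_C_zero]
    exact inv_mul_cancel₀ (hne g' hg')
  · have h1 : (f.map (fun g => (Polynomial.constantCoeff g)⁻¹)).prod * A = 1 := by
      rw [hA, ← Multiset.prod_map_mul]
      refine Multiset.prod_eq_one ?_
      intro x hx
      rw [Multiset.mem_map] at hx
      obtain ⟨g, hg, rfl⟩ := hx
      exact inv_mul_cancel₀ (hne g hg)
    have hCprod : (f.map (fun g => Polynomial.C (Polynomial.constantCoeff g)⁻¹)).prod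
        = Polynomial.C ((f.map (fun g => (Polynomial.constantCoeff g)⁻¹)).prod) :=
      Multiset.prod_hom' f Polynomial.C _
    have hinvA : (f.map (fun g => (Polynomial.constantCoeff g)⁻¹)).prod = A⁻¹ :=
      eq_inv_of_mul_eq_one_left h1
    have hprodp : (f.map (fun g => Polynomial.C (Polynomial.constantCoeff g)⁻¹ * g)).prod = p := by
      rw [Multiset.prod_map_mul, hCprod, hinvA, Multiset.map_id', ← huA, ← huC, ← hu]
      ring
    rw [Multiset.map_map]
    have h3 := Multiset.prod_hom' f mk
      (fun g => Polynomial.C (Polynomial.constantCoeff g)⁻¹ * g)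
    simp only [Function.comp] at h3 ⊢
    rw [h3, hprodp, hmkp]
end

section
/- Let k be a field and m ≥ 1 an integer. Every unit α of the truncated polynomial ring k[t]/(t^{m+1}) is the image of a product of finitely many non-constant irreducible polynomials in k[t], each having nonzero constant coefficient. -/
/-!
Lift the unit `α` to a polynomial `f`; its constant coefficient is nonzero, because taking the
constant coefficient factors through `k[t]/(t^(m+1))`. Replacing `f` by `f * (t^(m+1) + 1)`
keeps the image and makes the lift non-constant, hence a non-unit, so it is a product of
irreducibles. Each factor divides the lift and so also has nonzero constant coefficient.
-/

open Polynomial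

namespace Polynomial

variable {R : Type*}

theorem coeff_zero_ne_zero_of_dvd [Semiring R] {p f : R[X]} (hpf : p ∣ f) (hf : f.coeff 0 ≠ 0) :
    p.coeff 0 ≠ 0 := fun hp => hf <| X_dvd_iff.mp <| (X_dvd_iff.mpr hp).trans hpf

theorem isUnit_coeff_zero_of_isUnit_mk_span_X_pow [CommRing R] {n : ℕ} (hn : n ≠ 0) {f : R[X]}
    (hf : IsUnit (Ideal.Quotient.mk (Ideal.span {(X : R[X]) ^ n}) f)) : IsUnit (f.coeff 0) := by
  let evalZero : R[X] ⧸ Ideal.span {(X : R[X]) ^ n} →+* R :=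
    Ideal.Quotient.lift _ constantCoeff fun g hg =>
      X_dvd_iff.mp <| (dvd_pow_self X hn).trans (Ideal.mem_span_singleton.mp hg)
  exact hf.map evalZero

theorem mk_span_X_pow_mul_X_pow_add_one [CommRing R] (n : ℕ) (f : R[X]) :
    Ideal.Quotient.mk (Ideal.span {(X : R[X]) ^ n}) (f * (X ^ n + C 1)) =
      Ideal.Quotient.mk (Ideal.span {(X : R[X]) ^ n}) f :=
  Ideal.Quotient.eq.mpr <| Ideal.mem_span_singleton.mpr ⟨f, by rw [C_1]; ring⟩

theorem exists_natDegree_pos_lift_of_isUnit_mk_span_X_pow {k : Type*} [Field k] {n : ℕ}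
    (hn : n ≠ 0) {α : k[X] ⧸ Ideal.span {(X : k[X]) ^ n}} (hα : IsUnit α) :
    ∃ F : k[X], 0 < F.natDegree ∧ F.coeff 0 ≠ 0 ∧ Ideal.Quotient.mk _ F = α := by
  obtain ⟨f, rfl⟩ := Ideal.Quotient.mk_surjective α
  have hf0 : f.coeff 0 ≠ 0 := (isUnit_coeff_zero_of_isUnit_mk_span_X_pow hn hα).ne_zero
  have hf : f ≠ 0 := fun h => hf0 (by rw [h, coeff_zero])
  refine ⟨f * (X ^ n + C 1), ?_, ?_, mk_span_X_pow_mul_X_pow_add_one n f⟩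
  · rw [natDegree_mul hf (monic_X_pow_add_C 1 hn).ne_zero, natDegree_X_pow_add_C]
    omega
  · simpa [mul_coeff_zero, coeff_X_pow, hn.symm] using hf0

end Polynomial

theorem unit_truncated_irreducible_representatives_general (k : Type*) [Field k] (m : ℕ)
    (α : Polynomial k ⧸ Ideal.span {(Polynomial.X : Polynomial k) ^ (m + 1)})
    (hα : IsUnit α) :
    ∃ s : Multiset (Polynomial k),
      (∀ g ∈ s, Irreducible g ∧ 1 ≤ g.natDegree ∧ g.coeff 0 ≠ 0) ∧
      Ideal.Quotient.mk (Ideal.span {(Polynomial.X : Polynomial k) ^ (m + 1)}) s.prod = α := by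
  obtain ⟨F, hFdeg, hF0, rfl⟩ := exists_natDegree_pos_lift_of_isUnit_mk_span_X_pow m.succ_ne_zero hα
  have hF : F ≠ 0 := fun h => hF0 (by rw [h, coeff_zero])
  obtain ⟨s, hirr, rfl, -⟩ :=
    (WfDvdMonoid.not_isUnit_iff_exists_factors_eq F hF).mp (not_isUnit_of_natDegree_pos F hFdeg)
  exact ⟨s, fun g hg => ⟨hirr g hg, (hirr g hg).natDegree_pos,
    coeff_zero_ne_zero_of_dvd (Multiset.dvd_prod hg) hF0⟩, rfl⟩

/-- Let `k` be a field and `m ≥ 1`. Every unit `α` of the truncated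
polynomial ring `k[t]/(t^(m+1))` is the image of a product of finitely many non-constant
irreducible polynomials in `k[t]`, each having nonzero constant coefficient. -/
theorem unit_truncated_irreducible_representatives (k : Type*) [Field k] (m : ℕ) (hm : 1 ≤ m)
    (α : Polynomial k ⧸ Ideal.span {(Polynomial.X : Polynomial k) ^ (m + 1)})
    (hα : IsUnit α) :
    ∃ s : Multiset (Polynomial k),
      (∀ g ∈ s, Irreducible g ∧ 1 ≤ g.natDegree ∧ g.coeff 0 ≠ 0) ∧
      Ideal.Quotient.mk (Ideal.span {(Polynomial.X : Polynomial k) ^ (m + 1)}) s.prod = α :=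
  unit_truncated_irreducible_representatives_general k m α hα
end
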